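/- arXiv:2604.23461 — 2 statements merged into one kernel-verified Lean document; each statement's English description precedes it below -/
import Mathlib

section
/- Let Λ ∈ ℝ^{m×n} be a positive matrix, (r,c) positive margin vectors with Σ r_i = Σ c_j = N, and let κ̄(i,j) = log( (r_i/N)(c_j/N) / (Λ_{ij}/‖Λ‖₁) ). Suppose (α,β) are Schrödinger potentials with Σ_j e^{α_i+β_j} Λ_{ij} = r_i and Σ_i e^{α_i+β_j} Λ_{ij} = c_j for all i,j, obtained from the normalized potentials with gauge Σ_j β̄_j c_j/N = 0 by adding log(N/‖Λ‖₁). Then for all i, j: e^{−4‖κ̄‖_∞} N/‖Λ‖₁ ≤ e^{α_i + β_j} ≤ e^{2‖κ̄‖_∞} N/‖Λ‖₁. -/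
/-!
Write `u = e^α`, `v = e^β`, `A = ∑ u_i r_i`, `B = ∑ v_j c_j`. The bound on `κ̄` says that
`N² Λ_ij` and `r_i c_j S` agree up to a factor `e^K`. Summing the scaling equations against
this comparison shows that `S u_i B` and `S v_j A` agree with `N²` up to `e^K`, and that
`S A B ≤ e^K N³`. Hölder's inequality with exponents `(3, 3, 3)` for the weights `Λ`
gives `N³ ≤ S A B`.
Since `(S u_i B)(S v_j A) = u_i v_j S · S A B`, this pins `u_i v_j` between `e^{-3K} N / S` and
`e^{2K} N / S`.
-/

open Real Finset

def WithinFactor (t x y : ℝ) : Prop := x ≤ t * y ∧ y ≤ t * x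

namespace WithinFactor

variable {t x y : ℝ}

lemma of_mul_left {a : ℝ} (ha : 0 < a) (h : WithinFactor t (a * x) (a * y)) :
    WithinFactor t x y :=
  ⟨le_of_mul_le_mul_left (by linarith [h.1]) ha, le_of_mul_le_mul_left (by linarith [h.2]) ha⟩

lemma mul {s x' y' : ℝ} (h : WithinFactor t x y) (h' : WithinFactor s x' y') (hx : 0 ≤ x)
    (hy : 0 ≤ y) (hx' : 0 ≤ x') (hy' : 0 ≤ y') :
    WithinFactor (t * s) (x * x') (y * y') := by
  constructor
  · calc x * x' ≤ (t * y) * (s * y') := mul_le_mul h.1 h'.1 hx' (hx.trans h.1)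
      _ = t * s * (y * y') := by ring
  · calc y * y' ≤ (t * x) * (s * x') := mul_le_mul h.2 h'.2 hy' (hy.trans h.2)
      _ = t * s * (x * x') := by ring

lemma sum {ι : Type*} {s : Finset ι} {w f g : ι → ℝ} (hw : ∀ p ∈ s, 0 ≤ w p)
    (h : ∀ p ∈ s, WithinFactor t (f p) (g p)) :
    WithinFactor t (∑ p ∈ s, w p * f p) (∑ p ∈ s, w p * g p) := by
  constructor
  · calc ∑ p ∈ s, w p * f p ≤ ∑ p ∈ s, w p * (t * g p) :=
          sum_le_sum fun p hp => mul_le_mul_of_nonneg_left (h p hp).1 (hw p hp)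
      _ = t * ∑ p ∈ s, w p * g p := by rw [mul_sum]; exact sum_congr rfl fun p _ => by ring
  · calc ∑ p ∈ s, w p * g p ≤ ∑ p ∈ s, w p * (t * f p) :=
          sum_le_sum fun p hp => mul_le_mul_of_nonneg_left (h p hp).2 (hw p hp)
      _ = t * ∑ p ∈ s, w p * f p := by rw [mul_sum]; exact sum_congr rfl fun p _ => by ring

end WithinFactor

lemma le_exp_mul_of_log_div_le {a b K : ℝ} (ha : 0 < a) (hb : 0 < b) (h : log (a / b) ≤ K) :
    a ≤ exp K * b :=
  (div_le_iff₀ hb).mp ((log_le_iff_le_exp (div_pos ha hb)).mp h)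

lemma withinFactor_exp_of_abs_log_div_le {a b K : ℝ} (ha : 0 < a) (hb : 0 < b)
    (h : |log (a / b)| ≤ K) : WithinFactor (exp K) a b := by
  refine ⟨le_exp_mul_of_log_div_le ha hb (le_of_abs_le h), le_exp_mul_of_log_div_le hb ha ?_⟩
  rw [← inv_div, log_inv]
  linarith [(abs_le.mp h).1]

lemma withinFactor_marginals_of_abs_log_le {l a b N S K : ℝ} (hl : 0 < l) (ha : 0 < a)
    (hb : 0 < b) (hN : 0 < N) (hS : 0 < S) (h : |log (a / N * (b / N) / (l / S))| ≤ K) :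
    WithinFactor (exp K) (a * b * S) (N ^ 2 * l) := by
  have heq : a / N * (b / N) / (l / S) = a * b * S / (N ^ 2 * l) := by field_simp
  rw [heq] at h
  exact withinFactor_exp_of_abs_log_div_le (by positivity) (by positivity) h

lemma three_mul_mul_le (X Y : ℝ) (hX : 0 ≤ X) (hY : 0 ≤ Y) :
    3 * (X * Y) ≤ X ^ 2 * Y + X * Y ^ 2 + 1 := by
  nlinarith [mul_nonneg hX hY, sq_nonneg (X * Y - 1),
    mul_nonneg (mul_nonneg hX hY) (sq_nonneg (X - Y))]

lemma pow_three_sum_mul_mul_le {ι : Type*} (s : Finset ι) {w x y : ι → ℝ}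
    (hw : ∀ p ∈ s, 0 ≤ w p) (hx : ∀ p ∈ s, 0 ≤ x p) (hy : ∀ p ∈ s, 0 ≤ y p)
    (hA : 0 < ∑ p ∈ s, w p * (x p ^ 2 * y p)) (hB : 0 < ∑ p ∈ s, w p * (x p * y p ^ 2)) :
    (∑ p ∈ s, w p * (x p * y p)) ^ 3 ≤
      (∑ p ∈ s, w p * (x p ^ 2 * y p)) * (∑ p ∈ s, w p * (x p * y p ^ 2)) * ∑ p ∈ s, w p := by
  set N := ∑ p ∈ s, w p * (x p * y p)
  set A := ∑ p ∈ s, w p * (x p ^ 2 * y p)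
  set B := ∑ p ∈ s, w p * (x p * y p ^ 2)
  have hN : 0 ≤ N := sum_nonneg fun p hp => mul_nonneg (hw p hp) (mul_nonneg (hx p hp) (hy p hp))
  -- AM-GM for the three terms, after rescaling `x` by `N / A` and `y` by `N / B`
  have h : ∑ p ∈ s, w p * (3 * (N / A * x p * (N / B * y p))) ≤
      ∑ p ∈ s, w p * ((N / A * x p) ^ 2 * (N / B * y p) + N / A * x p * (N / B * y p) ^ 2 + 1) :=
    sum_le_sum fun p hp => mul_le_mul_of_nonneg_left
      (three_mul_mul_le _ _ (by have := hx p hp; positivity) (by have := hy p hp; positivity))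
      (hw p hp)
  have hl : ∑ p ∈ s, w p * (3 * (N / A * x p * (N / B * y p))) = 3 * (N ^ 3 / (A * B)) := by
    rw [show 3 * (N ^ 3 / (A * B)) = 3 * (N / A * (N / B)) * N by ring, mul_sum]
    exact sum_congr rfl fun p _ => by ring
  have hr : ∑ p ∈ s, w p *
        ((N / A * x p) ^ 2 * (N / B * y p) + N / A * x p * (N / B * y p) ^ 2 + 1) =
      (N / A) ^ 2 * (N / B) * A + N / A * (N / B) ^ 2 * B + ∑ p ∈ s, w p := by
    simp only [A, B, mul_sum, ← sum_add_distrib]; exact sum_congr rfl fun p _ => by ring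
  have hA' : (N / A) ^ 2 * (N / B) * A = N ^ 3 / (A * B) := by field_simp
  have hB' : N / A * (N / B) ^ 2 * B = N ^ 3 / (A * B) := by field_simp
  rw [hl, hr, hA', hB'] at h
  rw [← div_le_iff₀' (mul_pos hA hB)]
  linarith

lemma withinFactor_row {κ : Type*} [Fintype κ] {Λ c v : κ → ℝ} {r u t N S : ℝ}
    (hr : 0 < r) (hu : 0 ≤ u) (hv : ∀ j, 0 ≤ v j)
    (hΛ : ∀ j, WithinFactor t (r * c j * S) (N ^ 2 * Λ j)) (hrow : ∑ j, u * v j * Λ j = r) :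
    WithinFactor t (S * u * ∑ j, v j * c j) (N ^ 2) := by
  have h := WithinFactor.sum (s := univ) (w := fun j => u * v j)
    (fun j _ => mul_nonneg hu (hv j)) (fun j _ => hΛ j)
  refine WithinFactor.of_mul_left hr ?_
  convert h using 1
  · rw [mul_sum, mul_sum]; exact sum_congr rfl fun j _ => by ring
  · rw [← hrow, sum_mul]; exact sum_congr rfl fun j _ => by ring

lemma bounds_of_withinFactor_mul_mass {P S N M K : ℝ} (hP : 0 ≤ P) (hS : 0 < S) (hN : 0 < N)
    (hM_ge : N ^ 3 ≤ M) (hM_le : M ≤ exp K * N ^ 3)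
    (h : WithinFactor (exp (2 * K)) (P * S * M) (N ^ 2 * N ^ 2)) :
    exp (-(3 * K)) * N / S ≤ P ∧ P ≤ exp (2 * K) * N / S := by
  have hPS : 0 ≤ P * S := mul_nonneg hP hS.le
  constructor
  · have h3 : N * N ^ 3 ≤ exp (3 * K) * (P * S) * N ^ 3 := calc
      N * N ^ 3 = N ^ 2 * N ^ 2 := by ring
      _ ≤ exp (2 * K) * (P * S * M) := h.2
      _ ≤ exp (2 * K) * (P * S * (exp K * N ^ 3)) := by gcongr
      _ = exp (3 * K) * (P * S) * N ^ 3 := by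
        rw [show 3 * K = 2 * K + K by ring, exp_add]; ring
    rw [div_le_iff₀ hS, exp_neg, inv_mul_le_iff₀ (exp_pos _)]
    exact le_of_mul_le_mul_right h3 (by positivity)
  · have h2 : P * S * N ^ 3 ≤ exp (2 * K) * N * N ^ 3 := calc
      P * S * N ^ 3 ≤ P * S * M := by gcongr
      _ ≤ exp (2 * K) * (N ^ 2 * N ^ 2) := h.1
      _ = exp (2 * K) * N * N ^ 3 := by ring
    rw [le_div_iff₀ hS]
    exact le_of_mul_le_mul_right h2 (by positivity)

section Scaling

variable {ι κ : Type*} [Fintype ι] [Fintype κ] {Λ : ι → κ → ℝ} {r : ι → ℝ} {c : κ → ℝ}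
  {u : ι → ℝ} {v : κ → ℝ} {N : ℝ}

lemma pow_three_le_of_scaling (hΛ : ∀ i j, 0 ≤ Λ i j) (hu : ∀ i, 0 ≤ u i) (hv : ∀ j, 0 ≤ v j)
    (hrN : ∑ i, r i = N) (hrow : ∀ i, ∑ j, u i * v j * Λ i j = r i)
    (hcol : ∀ j, ∑ i, u i * v j * Λ i j = c j)
    (hA : 0 < ∑ i, u i * r i) (hB : 0 < ∑ j, v j * c j) :
    N ^ 3 ≤ (∑ i, u i * r i) * (∑ j, v j * c j) * ∑ i, ∑ j, Λ i j := by
  have hN : ∑ i, ∑ j, Λ i j * (u i * v j) = N := by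
    rw [← hrN]
    exact sum_congr rfl fun i _ => by rw [← hrow i]; exact sum_congr rfl fun j _ => by ring
  have hA' : ∑ i, ∑ j, Λ i j * (u i ^ 2 * v j) = ∑ i, u i * r i := by
    refine sum_congr rfl fun i _ => ?_
    rw [← hrow i, mul_sum]; exact sum_congr rfl fun j _ => by ring
  have hB' : ∑ i, ∑ j, Λ i j * (u i * v j ^ 2) = ∑ j, v j * c j := by
    rw [sum_comm]; refine sum_congr rfl fun j _ => ?_
    rw [← hcol j, mul_sum]; exact sum_congr rfl fun i _ => by ring
  have h := pow_three_sum_mul_mul_le univ (w := fun p : ι × κ => Λ p.1 p.2)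
    (x := fun p => u p.1) (y := fun p => v p.2) (fun p _ => hΛ _ _) (fun p _ => hu _)
    (fun p _ => hv _) (by simpa only [Fintype.sum_prod_type, hA'])
    (by simpa only [Fintype.sum_prod_type, hB'])
  simpa only [Fintype.sum_prod_type, hN, hA', hB'] using h

theorem scaling_mul_bounds {S K : ℝ} (hΛ : ∀ i j, 0 < Λ i j) (hr : ∀ i, 0 < r i)
    (hc : ∀ j, 0 < c j) (hu : ∀ i, 0 < u i) (hv : ∀ j, 0 < v j) (hN : 0 < N)
    (hrN : ∑ i, r i = N) (hS : S = ∑ i, ∑ j, Λ i j)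
    (hK : ∀ i j, |log (r i / N * (c j / N) / (Λ i j / S))| ≤ K)
    (hrow : ∀ i, ∑ j, u i * v j * Λ i j = r i) (hcol : ∀ j, ∑ i, u i * v j * Λ i j = c j)
    (i : ι) (j : κ) :
    exp (-(3 * K)) * N / S ≤ u i * v j ∧ u i * v j ≤ exp (2 * K) * N / S := by
  set A := ∑ i, u i * r i
  set B := ∑ j, v j * c j
  have hS0 : 0 < S :=
    hS ▸ sum_pos (fun i _ => sum_pos (fun j _ => hΛ i j) ⟨j, mem_univ j⟩) ⟨i, mem_univ i⟩
  have hA : 0 < A := sum_pos (fun i _ => mul_pos (hu i) (hr i)) ⟨i, mem_univ i⟩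
  have hB : 0 < B := sum_pos (fun j _ => mul_pos (hv j) (hc j)) ⟨j, mem_univ j⟩
  have hkernel i j : WithinFactor (exp K) (r i * c j * S) (N ^ 2 * Λ i j) :=
    withinFactor_marginals_of_abs_log_le (hΛ i j) (hr i) (hc j) hN hS0 (hK i j)
  have hrowB i : WithinFactor (exp K) (S * u i * B) (N ^ 2) :=
    withinFactor_row (hr i) (hu i).le (fun j => (hv j).le) (hkernel i) (hrow i)
  have hcolA j : WithinFactor (exp K) (S * v j * A) (N ^ 2) :=
    withinFactor_row (hc j) (hv j).le (fun i => (hu i).le)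
      (fun i => by simpa only [mul_comm (r i) (c j)] using hkernel i j)
      (by rw [← hcol j]; exact sum_congr rfl fun i _ => by ring)
  have hmass_le : S * A * B ≤ exp K * N ^ 3 := by
    have h := (WithinFactor.sum (s := univ) (fun i _ => (hr i).le) (fun i _ => hrowB i)).1
    convert h using 1
    · simp only [A, sum_mul, mul_sum]; exact sum_congr rfl fun i _ => by ring
    · rw [← sum_mul, hrN]; ring
  have hmass_ge : N ^ 3 ≤ S * A * B := by
    have h := pow_three_le_of_scaling (fun i j => (hΛ i j).le) (fun i => (hu i).le)
      (fun j => (hv j).le) hrN hrow hcol hA hB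
    rw [← hS] at h; linarith
  have hprod := (hrowB i).mul (hcolA j) (mul_pos (mul_pos hS0 (hu i)) hB).le (by positivity)
    (mul_pos (mul_pos hS0 (hv j)) hA).le (by positivity)
  rw [show S * u i * B * (S * v j * A) = u i * v j * S * (S * A * B) by ring, ← exp_add,
    ← two_mul] at hprod
  exact bounds_of_withinFactor_mul_mass (mul_pos (hu i) (hv j)).le hS0 hN hmass_ge hmass_le hprod

end Scaling

theorem matrix_scaling_potential_bounds_general {m n : ℕ}
    (Λ : Matrix (Fin m) (Fin n) ℝ) (hΛ : ∀ i j, 0 < Λ i j)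
    (r : Fin m → ℝ) (c : Fin n → ℝ) (hr : ∀ i, 0 < r i) (hc : ∀ j, 0 < c j)
    (N : ℝ) (hN : 0 < N) (hrN : ∑ i, r i = N)
    (S : ℝ) (hS : S = ∑ i, ∑ j, Λ i j)
    (K : ℝ) (hK : ∀ i j, |Real.log ((r i / N) * (c j / N) / (Λ i j / S))| ≤ K)
    (α : Fin m → ℝ) (β : Fin n → ℝ)
    (hrowEq : ∀ i, ∑ j, Real.exp (α i + β j) * Λ i j = r i)
    (hcolEq : ∀ j, ∑ i, Real.exp (α i + β j) * Λ i j = c j) :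
    ∀ i j, Real.exp (-(4 * K)) * N / S ≤ Real.exp (α i + β j) ∧
      Real.exp (α i + β j) ≤ Real.exp (2 * K) * N / S := by
  intro i j
  have hK0 : 0 ≤ K := (abs_nonneg _).trans (hK i j)
  have hS0 : 0 ≤ S := hS ▸ sum_nonneg fun i _ => sum_nonneg fun j _ => (hΛ i j).le
  have h := scaling_mul_bounds (u := fun i => exp (α i)) (v := fun j => exp (β j)) hΛ hr hc
    (fun i => exp_pos _) (fun j => exp_pos _) hN hrN hS hK
    (by simpa only [exp_add] using hrowEq) (by simpa only [exp_add] using hcolEq) i j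
  rw [exp_add]
  exact ⟨le_trans (by gcongr; linarith) h.1, h.2⟩

/-- Two-sided uniform bound on the Schrödinger (matrix scaling) potentials for a positive
matrix `Λ` with positive margins `(r, c)` of total mass `N`:
`e^{−4‖κ̄‖_∞} N/‖Λ‖₁ ≤ e^{α_i+β_j} ≤ e^{2‖κ̄‖_∞} N/‖Λ‖₁`, where
`κ̄(i,j) = log((r_i/N)(c_j/N)/(Λ_{ij}/‖Λ‖₁))`. -/
theorem matrix_scaling_potential_bounds {m n : ℕ} (hm : 0 < m) (hn : 0 < n)
    (Λ : Matrix (Fin m) (Fin n) ℝ) (hΛ : ∀ i j, 0 < Λ i j)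
    (r : Fin m → ℝ) (c : Fin n → ℝ) (hr : ∀ i, 0 < r i) (hc : ∀ j, 0 < c j)
    (N : ℝ) (hN : 0 < N) (hrN : ∑ i, r i = N) (hcN : ∑ j, c j = N)
    (S : ℝ) (hS : S = ∑ i, ∑ j, Λ i j)
    (K : ℝ) (hK : ∀ i j, |Real.log ((r i / N) * (c j / N) / (Λ i j / S))| ≤ K)
    (α : Fin m → ℝ) (β : Fin n → ℝ)
    (hrowEq : ∀ i, ∑ j, Real.exp (α i + β j) * Λ i j = r i)
    (hcolEq : ∀ j, ∑ i, Real.exp (α i + β j) * Λ i j = c j) :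
    ∀ i j, Real.exp (-(4 * K)) * N / S ≤ Real.exp (α i + β j) ∧
      Real.exp (α i + β j) ≤ Real.exp (2 * K) * N / S :=
  matrix_scaling_potential_bounds_general Λ hΛ r c hr hc N hN hrN S hS K hK α β hrowEq hcolEq
end

section
/- Let A be an m×n nonnegative matrix that is scalable to a positive margin (r,c), i.e., there exist positive diagonals D₁, D₂ with D₁AD₂ ∈ T(r,c). Then for any subsets I ⊆ [m], J ⊆ [n] with A_{Iᶜ,J} = 0 (every entry of A with row index outside I and column index in J vanishes), one has Σ_{i∈I} r_i ≥ Σ_{j∈J} c_j. -/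
/-- One direction of the Menon–Schneider scalability criterion: if a nonnegative matrix
`A` is scalable to a positive margin `(r, c)` and the block `A_{Iᶜ, J}` vanishes, then
`Σ_{i∈I} r_i ≥ Σ_{j∈J} c_j`. -/
theorem menon_schneider_necessity {m n : ℕ}
    (A : Matrix (Fin m) (Fin n) ℝ) (hA : ∀ i j, 0 ≤ A i j)
    (r : Fin m → ℝ) (c : Fin n → ℝ) (hr : ∀ i, 0 < r i) (hc : ∀ j, 0 < c j)
    (d₁ : Fin m → ℝ) (d₂ : Fin n → ℝ) (hd₁ : ∀ i, 0 < d₁ i) (hd₂ : ∀ j, 0 < d₂ j)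
    (hrow : ∀ i, ∑ j, d₁ i * A i j * d₂ j = r i)
    (hcol : ∀ j, ∑ i, d₁ i * A i j * d₂ j = c j)
    (I : Finset (Fin m)) (J : Finset (Fin n))
    (hzero : ∀ i ∉ I, ∀ j ∈ J, A i j = 0) :
    ∑ j ∈ J, c j ≤ ∑ i ∈ I, r i := by
  have key : ∑ j ∈ J, c j = ∑ i ∈ I, ∑ j ∈ J, d₁ i * A i j * d₂ j := by
    calc ∑ j ∈ J, c j = ∑ j ∈ J, ∑ i, d₁ i * A i j * d₂ j := by
          exact Finset.sum_congr rfl fun j _ => (hcol j).symm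
      _ = ∑ i, ∑ j ∈ J, d₁ i * A i j * d₂ j := Finset.sum_comm
      _ = ∑ i ∈ I, ∑ j ∈ J, d₁ i * A i j * d₂ j := by
          refine (Finset.sum_subset (Finset.subset_univ I) ?_).symm
          intro i _ hi
          refine Finset.sum_eq_zero fun j hj => ?_
          rw [hzero i hi j hj]; ring
  rw [key]
  refine Finset.sum_le_sum fun i _ => ?_
  rw [← hrow i]
  refine Finset.sum_le_sum_of_subset_of_nonneg (Finset.subset_univ J) ?_
  intro j _ _
  exact mul_nonneg (mul_nonneg (hd₁ i).le (hA i j)) (hd₂ j).le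
end
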